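/- arXiv:1302.0972 — 3 statements merged into one kernel-verified Lean document; each statement's English description precedes it below -/
import Mathlib

section
/- Let G be the group with presentation ⟨a, b, c | abc = 1, a⁵ = b⁵ = c⁵ = 1⟩. Then for every group homomorphism φ from G to the additive group ℤ/5ℤ such that φ(a), φ(b), φ(c) are all nonzero, there exists a unit k ∈ (ℤ/5ℤ)ˣ such that the multiset {k·φ(a), k·φ(b), k·φ(c)} equals the multiset {1, 1, 3}. Consequently all such homomorphisms are equivalent up to an automorphism of ℤ/5ℤ and a permutation of the generator values. -/
/-- Relations for `⟨a,b,c ∣ abc = 1, a⁵ = b⁵ = c⁵ = 1⟩`, the orbifold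
fundamental group of `S²(5,5,5)`.  Generators: `a = 0`, `b = 1`, `c = 2`. -/
def relsS555 : Set (FreeGroup (Fin 3)) :=
  {FreeGroup.of 0 * FreeGroup.of 1 * FreeGroup.of 2} ∪
    Set.range (fun i : Fin 3 => (FreeGroup.of i) ^ 5)

lemma key : ∀ x y z : ZMod 5, x ≠ 0 → y ≠ 0 → z ≠ 0 → x + y + z = 0 →
    ∃ k : (ZMod 5)ˣ, ({(k : ZMod 5) * x, (k : ZMod 5) * y, (k : ZMod 5) * z} :
      Multiset (ZMod 5)) = {1, 1, 3} := by decide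

/-- For every homomorphism `φ` from `⟨a,b,c ∣ abc = 1, a⁵ = b⁵ = c⁵ = 1⟩` to
`ℤ/5ℤ` with `φ(a), φ(b), φ(c)` all nonzero, there is a unit `k` of `ℤ/5ℤ` such
that the multiset `{k·φ(a), k·φ(b), k·φ(c)}` equals `{1, 1, 3}`; hence all such
homomorphisms agree up to an automorphism of `ℤ/5ℤ` and a permutation of the
generator values. -/
theorem hom_S555_to_Z5 :
    ∀ φ : PresentedGroup relsS555 →* Multiplicative (ZMod 5),
      (∀ i : Fin 3, φ (PresentedGroup.of i) ≠ 1) →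
        ∃ k : (ZMod 5)ˣ,
          ({(k : ZMod 5) * Multiplicative.toAdd (φ (PresentedGroup.of 0)),
            (k : ZMod 5) * Multiplicative.toAdd (φ (PresentedGroup.of 1)),
            (k : ZMod 5) * Multiplicative.toAdd (φ (PresentedGroup.of 2))} :
              Multiset (ZMod 5)) = {1, 1, 3} := by
  intro φ hφ
  have hrel : (PresentedGroup.of 0 : PresentedGroup relsS555) *
      PresentedGroup.of 1 * PresentedGroup.of 2 = 1 := by
    have : (FreeGroup.of 0 * FreeGroup.of 1 * FreeGroup.of 2 : FreeGroup (Fin 3)) ∈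
        Subgroup.normalClosure relsS555 :=
      Subgroup.subset_normalClosure (Or.inl rfl)
    exact (QuotientGroup.eq_one_iff _).mpr this
  have hsum : Multiplicative.toAdd (φ (PresentedGroup.of 0)) +
      Multiplicative.toAdd (φ (PresentedGroup.of 1)) +
      Multiplicative.toAdd (φ (PresentedGroup.of 2)) = 0 := by
    have := congrArg φ hrel
    simp only [map_mul, map_one] at this
    simpa [← toAdd_mul] using congrArg Multiplicative.toAdd this
  exact key _ _ _ (fun h => hφ 0 (by simpa using congrArg Multiplicative.ofAdd h))
    (fun h => hφ 1 (by simpa using congrArg Multiplicative.ofAdd h))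
    (fun h => hφ 2 (by simpa using congrArg Multiplicative.ofAdd h)) hsum
end

section
/- Let G be the group with presentation ⟨x, a, b, c | abc = x², a² = b² = c² = 1⟩. Then every group homomorphism φ from G to the additive group ℤ/4ℤ such that φ(a), φ(b), φ(c) have additive order 2 satisfies φ(a) = φ(b) = φ(c) = 2 and φ(x) ∈ {1, 3}; in particular every such φ is surjective, and any two such φ differ by the automorphism t ↦ 3t of ℤ/4ℤ. -/
/-- Relations for `⟨x,a,b,c ∣ abc = x², a² = b² = c² = 1⟩`, the orbifold
fundamental group of `ℝP²(2,2,2)`.  Generators: `x = 0`, `a = 1`, `b = 2`,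
`c = 3`. -/
def relsRP2222 : Set (FreeGroup (Fin 4)) :=
  {FreeGroup.of 1 * FreeGroup.of 2 * FreeGroup.of 3 * ((FreeGroup.of 0) ^ 2)⁻¹,
    (FreeGroup.of 1) ^ 2, (FreeGroup.of 2) ^ 2, (FreeGroup.of 3) ^ 2}

lemma relsMk (r : FreeGroup (Fin 4)) (h : r ∈ relsRP2222) :
    PresentedGroup.mk relsRP2222 r = 1 := by
  have : r ∈ Subgroup.normalClosure relsRP2222 := Subgroup.subset_normalClosure h
  exact (QuotientGroup.eq_one_iff r).mpr this

lemma rel_abc : (PresentedGroup.of 1 * PresentedGroup.of 2 * PresentedGroup.of 3 :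
    PresentedGroup relsRP2222) = (PresentedGroup.of 0) ^ 2 := by
  have h := relsMk _ (by left; rfl)
  simp only [map_mul, map_inv, map_pow] at h
  rw [mul_inv_eq_one] at h
  exact h

lemma rel_sq (i : Fin 4) (hi : i = 1 ∨ i = 2 ∨ i = 3) :
    ((PresentedGroup.of i : PresentedGroup relsRP2222)) ^ 2 = 1 := by
  have h : ((FreeGroup.of i) ^ 2) ∈ relsRP2222 := by
    rcases hi with h | h | h <;> subst h
    · right; left; rfl
    · right; right; left; rfl
    · right; right; right; rfl
  have := relsMk _ h
  simp only [map_pow] at this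
  exact this

lemma z4_order2 {t : ZMod 4} (h2 : (2 : ℕ) • t = 0) (h0 : t ≠ 0) : t = 2 := by
  revert h2 h0; revert t; decide

lemma key_s8 (φ : PresentedGroup relsRP2222 →* Multiplicative (ZMod 4))
    (h1 : orderOf (φ (PresentedGroup.of 1)) = 2) (h2 : orderOf (φ (PresentedGroup.of 2)) = 2)
    (h3 : orderOf (φ (PresentedGroup.of 3)) = 2) :
    Multiplicative.toAdd (φ (PresentedGroup.of 1)) = 2 ∧
    Multiplicative.toAdd (φ (PresentedGroup.of 2)) = 2 ∧
    Multiplicative.toAdd (φ (PresentedGroup.of 3)) = 2 ∧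
    (Multiplicative.toAdd (φ (PresentedGroup.of 0)) = 1 ∨
     Multiplicative.toAdd (φ (PresentedGroup.of 0)) = 3) ∧
    Function.Surjective φ := by
  have val2 : ∀ i : Fin 4, orderOf (φ (PresentedGroup.of i)) = 2 →
      Multiplicative.toAdd (φ (PresentedGroup.of i)) = 2 := by
    intro i hi
    apply z4_order2
    · have : (φ (PresentedGroup.of i)) ^ 2 = 1 := by
        rw [← hi]; exact pow_orderOf_eq_one _
      have := congrArg Multiplicative.toAdd this
      simpa [toAdd_pow] using this
    · intro h0
      have : φ (PresentedGroup.of i) = 1 := by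
        have := congrArg Multiplicative.ofAdd h0
        simpa using this
      rw [this, orderOf_one] at hi
      exact absurd hi (by norm_num)
  have ha := val2 1 h1
  have hb := val2 2 h2
  have hc := val2 3 h3
  have habc := congrArg Multiplicative.toAdd (congrArg φ rel_abc)
  simp only [map_mul, map_pow, toAdd_mul, toAdd_pow, ha, hb, hc] at habc
  have hx : Multiplicative.toAdd (φ (PresentedGroup.of 0)) = 1 ∨
      Multiplicative.toAdd (φ (PresentedGroup.of 0)) = 3 := by
    revert habc
    generalize Multiplicative.toAdd (φ (PresentedGroup.of 0)) = x
    revert x; decide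
  refine ⟨ha, hb, hc, hx, ?_⟩
  intro y
  set x := Multiplicative.toAdd (φ (PresentedGroup.of 0)) with hxdef
  have hxx : x * x = 1 := by rcases hx with h | h <;> rw [h] <;> decide
  refine ⟨(PresentedGroup.of 0) ^ (Multiplicative.toAdd y * x).val, ?_⟩
  have : Multiplicative.toAdd (φ ((PresentedGroup.of 0) ^ (Multiplicative.toAdd y * x).val))
      = Multiplicative.toAdd y := by
    rw [map_pow, toAdd_pow, nsmul_eq_mul, ZMod.natCast_val, ZMod.cast_id, ← hxdef,
      mul_assoc, hxx, mul_one]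
  exact Multiplicative.toAdd.injective this

/-- Every homomorphism `φ` from `⟨x,a,b,c ∣ abc = x², a² = b² = c² = 1⟩` to
`ℤ/4ℤ` with `φ(a), φ(b), φ(c)` of additive order `2` satisfies
`φ(a) = φ(b) = φ(c) = 2` and `φ(x) ∈ {1, 3}`; in particular every such `φ` is
surjective, and any two such homomorphisms agree or differ by the automorphism
`t ↦ 3t` of `ℤ/4ℤ`. -/
theorem hom_RP2222_to_Z4 :
    (∀ φ : PresentedGroup relsRP2222 →* Multiplicative (ZMod 4),
      orderOf (φ (PresentedGroup.of 1)) = 2 → orderOf (φ (PresentedGroup.of 2)) = 2 →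
      orderOf (φ (PresentedGroup.of 3)) = 2 →
        (Multiplicative.toAdd (φ (PresentedGroup.of 1)) = 2 ∧
         Multiplicative.toAdd (φ (PresentedGroup.of 2)) = 2 ∧
         Multiplicative.toAdd (φ (PresentedGroup.of 3)) = 2 ∧
         (Multiplicative.toAdd (φ (PresentedGroup.of 0)) = 1 ∨
          Multiplicative.toAdd (φ (PresentedGroup.of 0)) = 3) ∧
         Function.Surjective φ)) ∧
    (∀ φ ψ : PresentedGroup relsRP2222 →* Multiplicative (ZMod 4),
      (orderOf (φ (PresentedGroup.of 1)) = 2 ∧ orderOf (φ (PresentedGroup.of 2)) = 2 ∧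
       orderOf (φ (PresentedGroup.of 3)) = 2) →
      (orderOf (ψ (PresentedGroup.of 1)) = 2 ∧ orderOf (ψ (PresentedGroup.of 2)) = 2 ∧
       orderOf (ψ (PresentedGroup.of 3)) = 2) →
        φ = ψ ∨ (∀ g : PresentedGroup relsRP2222,
          Multiplicative.toAdd (φ g) = 3 * Multiplicative.toAdd (ψ g))) := by
  constructor
  · exact fun φ h1 h2 h3 => key_s8 φ h1 h2 h3
  · intro φ ψ ⟨hφ1, hφ2, hφ3⟩ ⟨hψ1, hψ2, hψ3⟩
    obtain ⟨ha, hb, hc, hx, -⟩ := key_s8 φ hφ1 hφ2 hφ3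
    obtain ⟨ha', hb', hc', hx', -⟩ := key_s8 ψ hψ1 hψ2 hψ3
    by_cases heq : Multiplicative.toAdd (φ (PresentedGroup.of 0)) =
        Multiplicative.toAdd (ψ (PresentedGroup.of 0))
    · left
      apply PresentedGroup.ext
      intro i
      have hi : i = 0 ∨ i = 1 ∨ i = 2 ∨ i = 3 := by omega
      rcases hi with h | h | h | h <;> subst h
      · exact Multiplicative.toAdd.injective heq
      · exact Multiplicative.toAdd.injective (ha.trans ha'.symm)
      · exact Multiplicative.toAdd.injective (hb.trans hb'.symm)
      · exact Multiplicative.toAdd.injective (hc.trans hc'.symm)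
    · right
      have hχ : φ = (AddMonoidHom.toMultiplicative
          (AddMonoidHom.mulLeft (3 : ZMod 4))).comp ψ := by
        apply PresentedGroup.ext
        intro i
        apply Multiplicative.toAdd.injective
        have hcomp : ∀ g, Multiplicative.toAdd
            (((AddMonoidHom.toMultiplicative (AddMonoidHom.mulLeft (3 : ZMod 4))).comp ψ) g)
            = 3 * Multiplicative.toAdd (ψ g) := fun g => rfl
        rw [hcomp]
        have hi : i = 0 ∨ i = 1 ∨ i = 2 ∨ i = 3 := by omega
        rcases hi with h | h | h | h <;> subst h
        · rcases hx with h | h <;> rcases hx' with h' | h' <;> rw [h, h'] <;>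
            first
            | decide
            | (exact absurd (h.trans h'.symm) heq)
        · rw [ha, ha']; decide
        · rw [hb, hb']; decide
        · rw [hc, hc']; decide
      intro g
      rw [hχ]
      rfl
end

section
/- Let n = 7 or n = 11. Then there exist no natural numbers ĝ and k satisfying the equation (in ℚ): 2 − 2·2 = n·(2 − 2ĝ − k·(1 − 1/n)). -/
/-- For `n = 7` or `n = 11` there is no solution of the Riemann–Hurwitz
equation `2 − 2·2 = n·(2 − 2·ghat − k·(1 − 1/n))` in natural numbers `ghat`
(the quotient genus) and `k` (the number of cone points): there is no `ℤ/7` or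
`ℤ/11` action on the genus-2 surface. -/
theorem no_riemann_hurwitz_solution_seven_eleven (n : ℕ) (hn : n = 7 ∨ n = 11) :
    ¬ ∃ (ghat k : ℕ),
      (2 - 2 * 2 : ℚ) =
        (n : ℚ) * (2 - 2 * (ghat : ℚ) - (k : ℚ) * (1 - 1 / (n : ℚ))) := by
  rintro ⟨g, k, h⟩
  rcases hn with rfl | rfl
  · have hq : (6 * k + 14 * g : ℚ) = 16 := by push_cast at h ⊢; linarith
    have hN : 6 * k + 14 * g = 16 := by exact_mod_cast hq
    omega
  · have hq : (10 * k + 22 * g : ℚ) = 24 := by push_cast at h ⊢; linarith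
    have hN : 10 * k + 22 * g = 24 := by exact_mod_cast hq
    omega
end
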